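/- Let π be a prime of ℤ[ω] with π ≡ 1 (mod 3) and k ≥ 1. Then g(π², π^k) = -N(π²) if k = 3, and g(π², π^k) = 0 otherwise. -/

import Mathlib

/-- The ring of Eisenstein integers `ℤ[ω]`, represented as pairs `a + b·ω`. -/
@[ext]
structure Eisenstein where
  a : ℤ
  b : ℤ

namespace Eisenstein

instance : Zero Eisenstein := ⟨⟨0, 0⟩⟩
instance : One Eisenstein := ⟨⟨1, 0⟩⟩
instance : Add Eisenstein := ⟨fun x y => ⟨x.a + y.a, x.b + y.b⟩⟩
instance : Neg Eisenstein := ⟨fun x => ⟨-x.a, -x.b⟩⟩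
instance : Mul Eisenstein :=
  ⟨fun x y => ⟨x.a * y.a - x.b * y.b, x.a * y.b + x.b * y.a - x.b * y.b⟩⟩

@[simp] lemma zero_a : (0 : Eisenstein).a = 0 := rfl
@[simp] lemma zero_b : (0 : Eisenstein).b = 0 := rfl
@[simp] lemma one_a : (1 : Eisenstein).a = 1 := rfl
@[simp] lemma one_b : (1 : Eisenstein).b = 0 := rfl
@[simp] lemma add_a (x y : Eisenstein) : (x + y).a = x.a + y.a := rfl
@[simp] lemma add_b (x y : Eisenstein) : (x + y).b = x.b + y.b := rfl
@[simp] lemma neg_a (x : Eisenstein) : (-x).a = -x.a := rfl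
@[simp] lemma neg_b (x : Eisenstein) : (-x).b = -x.b := rfl
@[simp] lemma mul_a (x y : Eisenstein) : (x * y).a = x.a * y.a - x.b * y.b := rfl
@[simp] lemma mul_b (x y : Eisenstein) : (x * y).b = x.a * y.b + x.b * y.a - x.b * y.b := rfl

instance : CommRing Eisenstein where
  add_assoc x y z := by ext <;> simp <;> ring
  zero_add x := by ext <;> simp
  add_zero x := by ext <;> simp
  add_comm x y := by ext <;> simp <;> ring
  neg_add_cancel x := by ext <;> simp
  mul_assoc x y z := by ext <;> simp <;> ring
  one_mul x := by ext <;> simp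
  mul_one x := by ext <;> simp
  left_distrib x y z := by ext <;> simp <;> ring
  right_distrib x y z := by ext <;> simp <;> ring
  mul_comm x y := by ext <;> simp <;> ring
  zero_mul x := by ext <;> simp
  mul_zero x := by ext <;> simp
  nsmul := nsmulRec
  zsmul := zsmulRec

/-- The primitive cube root of unity `ω` in `ℤ[ω]`. -/
def ω : Eisenstein := ⟨0, 1⟩

/-- Complex conjugation on `ℤ[ω]`. -/
def conj (x : Eisenstein) : Eisenstein := ⟨x.a - x.b, -x.b⟩

/-- The norm `N(a + bω) = a² − ab + b²`. -/
def norm (x : Eisenstein) : ℤ := x.a ^ 2 - x.a * x.b + x.b ^ 2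

/-- The embedding of `ℤ[ω]` into `ℂ`, with `ω ↦ e^{2πi/3}`. -/
noncomputable def toC (x : Eisenstein) : ℂ :=
  (x.a : ℂ) + (x.b : ℂ) * Complex.exp (2 * Real.pi * Complex.I / 3)

/-- `R` is a complete system of residues modulo `n` in `ℤ[ω]`. -/
def IsResidueSystem (n : Eisenstein) (R : Finset Eisenstein) : Prop :=
  ∀ x : Eisenstein, ∃! d, d ∈ R ∧ n ∣ x - d

/-- `ě(z) = exp(2πi(z + z̄))`. -/
noncomputable def eE (z : ℂ) : ℂ :=
  Complex.exp (2 * Real.pi * Complex.I * (z + (starRingEnd ℂ) z))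

/-- `χ` is the cubic residue symbol `(m/n)₃` on `ℤ[ω]` (with values `0, 1, ω, ω²` in `ℤ[ω]`):
it is completely multiplicative in both arguments and is determined at prime moduli `π ∤ 3` by
`(m/π)₃ ≡ m^{(N(π)−1)/3} (mod π)`, `(m/π)₃ ∈ {1, ω, ω²}` for `π ∤ m`, and `(m/π)₃ = 0` for
`π ∣ m`. -/
def IsCubicResidueSymbol (χ : Eisenstein → Eisenstein → Eisenstein) : Prop :=
  (∀ m₁ m₂ n, χ (m₁ * m₂) n = χ m₁ n * χ m₂ n) ∧
  (∀ m n₁ n₂, χ m (n₁ * n₂) = χ m n₁ * χ m n₂) ∧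
  (∀ m π : Eisenstein, Prime π → ¬ π ∣ 3 → π ∣ m → χ m π = 0) ∧
  (∀ m π : Eisenstein, Prime π → ¬ π ∣ 3 → ¬ π ∣ m →
    χ m π ∈ ({1, ω, ω ^ 2} : Set Eisenstein) ∧
      π ∣ m ^ ((norm π - 1) / 3).toNat - χ m π)

/-- The generalized cubic Gauss sum `g(r,n) = Σ_{x mod n} (x/n)₃ ě(rx/n)`, computed with respect
to a complete residue system `R` modulo `n`. -/
noncomputable def gSum (χ : Eisenstein → Eisenstein → Eisenstein) (r n : Eisenstein)
    (R : Finset Eisenstein) : ℂ :=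
  ∑ x ∈ R, toC (χ x n) * eE (toC r * toC x / toC n)

end Eisenstein

/-!
Write `χ(x, π^k) = χ(x, π)^k` and `ě(π²x/π^k) = ψ_{π^k}(π²x)`, where `ψ_n(x) = ě(x/n)` is an
additive character modulo `n`. For `k ≤ 2` we have `π^k ∣ π²x`, so the additive factor is trivial
and the sum is that of the multiplicative character `χ(·, π)^k`, which is nontrivial since `3 ∤ k`;
it vanishes. For `k ≥ 4`, `ψ_{π^k}(π²x) = ψ_{π^{k-2}}(x)`, and translating `x` by `π^{k-3}a` with
`ψ_π(a) ≠ 1` fixes `χ(x, π)` and multiplies the summand by `ψ_π(a)`, so the sum vanishes again.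
For `k = 3` the summand is `ψ_π(x)` if `π ∤ x` and `0` otherwise, so the sum is
`Σ ψ_π(x) - #{x : π ∣ x} = 0 - N(π²)`: the residues mod `π³` divisible by `π` are `π` times a
residue system mod `π²`, whose size is `|det(y ↦ π²y)| = N(π²)`.
-/

lemma FiniteField.exists_pow_ne_one {F : Type*} [Field F] [Finite F] {e : ℕ} (he : 0 < e)
    (hlt : e < Nat.card F - 1) : ∃ g : F, g ≠ 0 ∧ g ^ e ≠ 1 := by
  by_contra! h
  have hexp : Monoid.exponent Fˣ ∣ e :=
    Monoid.exponent_dvd_of_forall_pow_eq_one fun u => Units.ext (by simpa using h u u.ne_zero)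
  rw [IsCyclic.exponent_eq_card, Nat.card_units] at hexp
  exact absurd (Nat.le_of_dvd he hexp) (not_le.mpr hlt)

namespace Eisenstein

@[simp] lemma sub_a (x y : Eisenstein) : (x - y).a = x.a - y.a := rfl
@[simp] lemma sub_b (x y : Eisenstein) : (x - y).b = x.b - y.b := rfl

@[simp] lemma intCast_a (m : ℤ) : (m : Eisenstein).a = m := by
  induction m using Int.induction_on <;> simp_all [Int.cast_add, Int.cast_sub]

@[simp] lemma intCast_b (m : ℤ) : (m : Eisenstein).b = 0 := by
  induction m using Int.induction_on <;> simp_all [Int.cast_add, Int.cast_sub]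

@[simp] lemma natCast_a (m : ℕ) : (m : Eisenstein).a = m := by
  simpa using intCast_a m

@[simp] lemma natCast_b (m : ℕ) : (m : Eisenstein).b = 0 := by
  simpa using intCast_b m

@[simp] lemma ofNat_a (m : ℕ) [m.AtLeastTwo] :
    (no_index (OfNat.ofNat m) : Eisenstein).a = OfNat.ofNat m :=
  natCast_a m

@[simp] lemma ofNat_b (m : ℕ) [m.AtLeastTwo] : (no_index (OfNat.ofNat m) : Eisenstein).b = 0 :=
  natCast_b m

@[simp] lemma zsmul_a (m : ℤ) (x : Eisenstein) : (m • x).a = m * x.a := by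
  simp [zsmul_eq_mul]

@[simp] lemma zsmul_b (m : ℤ) (x : Eisenstein) : (m • x).b = m * x.b := by
  simp [zsmul_eq_mul]

def trace (x : Eisenstein) : ℤ := 2 * x.a - x.b

lemma self_add_conj (x : Eisenstein) : x + conj x = (trace x : Eisenstein) := by
  ext <;> simp only [add_a, add_b, intCast_a, intCast_b, conj, trace] <;> ring

lemma mul_conj (x : Eisenstein) : x * conj x = (norm x : Eisenstein) := by
  ext <;> simp only [mul_a, mul_b, intCast_a, intCast_b, conj, norm] <;> ring

lemma norm_conj (x : Eisenstein) : norm (conj x) = norm x := by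
  simp only [norm, conj]; ring

lemma norm_mul (x y : Eisenstein) : norm (x * y) = norm x * norm y := by
  simp only [norm, mul_a, mul_b]; ring

lemma four_mul_norm (x : Eisenstein) : 4 * norm x = (2 * x.a - x.b) ^ 2 + 3 * x.b ^ 2 := by
  rw [norm]; ring

lemma norm_nonneg (x : Eisenstein) : 0 ≤ norm x := by
  nlinarith [four_mul_norm x, sq_nonneg (2 * x.a - x.b), sq_nonneg x.b]

lemma norm_eq_zero {x : Eisenstein} : norm x = 0 ↔ x = 0 := by
  refine ⟨fun h => ?_, fun h => by simp [h, norm]⟩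
  have hb : x.b = 0 := by nlinarith [four_mul_norm x, sq_nonneg (2 * x.a - x.b), sq_nonneg x.b]
  have ha : x.a = 0 := by nlinarith [four_mul_norm x, sq_nonneg (2 * x.a - x.b)]
  ext <;> simp [ha, hb]

instance : Nontrivial Eisenstein := ⟨⟨0, 1, fun h => by simpa using congrArg a h⟩⟩

instance : NoZeroDivisors Eisenstein := ⟨fun {x y} h => by
  have h' : norm x * norm y = 0 := by rw [← norm_mul, h]; rfl
  simpa only [mul_eq_zero, norm_eq_zero] using h'⟩

instance : IsDomain Eisenstein := NoZeroDivisors.to_isDomain _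

lemma isUnit_of_norm_eq_one {x : Eisenstein} (h : norm x = 1) : IsUnit x :=
  .of_mul_eq_one (conj x) (by rw [mul_conj, h, Int.cast_one])

lemma three_dvd_norm_sub_one {x : Eisenstein} (h1 : 3 ∣ x - 1) : 3 ∣ norm x - 1 := by
  obtain ⟨γ, hγ⟩ := h1
  obtain ⟨ha, hb⟩ : x.a = 1 + 3 * γ.a ∧ x.b = 3 * γ.b := by
    constructor
    · have := congrArg a hγ
      simp only [sub_a, one_a, mul_a, ofNat_a, ofNat_b, zero_mul, sub_zero] at this
      omega
    · have := congrArg b hγ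
      simp only [sub_b, one_b, mul_b, ofNat_a, ofNat_b, zero_mul, sub_zero, add_zero] at this
      omega
  exact ⟨2 * γ.a - γ.b + 3 * γ.a ^ 2 - 3 * γ.a * γ.b + 3 * γ.b ^ 2, by rw [norm, ha, hb]; ring⟩

lemma four_le_norm {π : Eisenstein} (hπ : ¬ IsUnit π) (h1 : 3 ∣ π - 1) : 4 ≤ norm π := by
  have := three_dvd_norm_sub_one h1
  have := norm_nonneg π
  have : norm π ≠ 1 := fun h => hπ (isUnit_of_norm_eq_one h)
  omega

lemma not_dvd_three {π : Eisenstein} (hπ : ¬ IsUnit π) (h1 : 3 ∣ π - 1) : ¬ π ∣ 3 := fun h =>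
  hπ (isUnit_of_dvd_one (by simpa using (dvd_sub (dvd_refl π) (h.trans h1))))

lemma not_dvd_of_norm_eq_three {π d : Eisenstein} (h3 : ¬ π ∣ 3) (hd : norm d = 3) : ¬ π ∣ d :=
  fun h => h3 (h.trans ⟨conj d, by rw [mul_conj, hd]; rfl⟩)

lemma norm_sub_eq_three {c c' : Eisenstein} (hc : c ∈ ({1, ω, ω ^ 2} : Set Eisenstein))
    (hc' : c' ∈ ({1, ω, ω ^ 2} : Set Eisenstein)) (h : c ≠ c') : norm (c - c') = 3 := by
  simp only [Set.mem_insert_iff, Set.mem_singleton_iff] at hc hc'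
  rcases hc with rfl | rfl | rfl <;> rcases hc' with rfl | rfl | rfl <;>
    first | exact absurd rfl h | decide

instance : DecidableEq Eisenstein := fun x y =>
  decidable_of_iff (x.a = y.a ∧ x.b = y.b) Eisenstein.ext_iff.symm

def coordEquiv : Eisenstein ≃ₗ[ℤ] (Fin 2 → ℤ) where
  toFun x := ![x.a, x.b]
  invFun v := ⟨v 0, v 1⟩
  map_add' x y := by ext i; fin_cases i <;> simp
  map_smul' m x := by ext i; fin_cases i <;> simp
  left_inv x := rfl
  right_inv v := by ext i; fin_cases i <;> rfl

lemma coordEquiv_symm_apply (v : Fin 2 → ℤ) : coordEquiv.symm v = ⟨v 0, v 1⟩ := rfl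

noncomputable def basis : Module.Basis (Fin 2) ℤ Eisenstein := .ofEquivFun coordEquiv

instance : Module.Free ℤ Eisenstein := .of_basis basis
instance : Module.Finite ℤ Eisenstein := .of_basis basis

@[simp] lemma basis_repr (x : Eisenstein) : ⇑(basis.repr x) = ![x.a, x.b] := rfl

@[simp] lemma basis_zero : basis 0 = 1 := by
  simp only [basis, Module.Basis.coe_ofEquivFun, coordEquiv_symm_apply]
  ext <;> simp

@[simp] lemma basis_one : basis 1 = ω := by
  simp only [basis, Module.Basis.coe_ofEquivFun, coordEquiv_symm_apply]
  ext <;> simp [ω]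

lemma basis_det_mul (n : Eisenstein) : basis.det (fun i => n * basis i) = norm n := by
  rw [Module.Basis.det_apply, Matrix.det_fin_two]
  simp only [Module.Basis.toMatrix_apply, basis_zero, basis_one, basis_repr, mul_one, ω, mul_a,
    mul_b, Matrix.cons_val_zero, Matrix.cons_val_one, Matrix.cons_val_fin_one, norm]
  ring

lemma card_quotient_span_singleton {n : Eisenstein} (hn : n ≠ 0) :
    Nat.card (Eisenstein ⧸ Ideal.span {n}) = (norm n).natAbs := by
  have := Submodule.natAbs_det_basis_change basis ((Ideal.span {n}).restrictScalars ℤ)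
    (Ideal.basisSpanSingleton basis hn)
  have e : (Eisenstein ⧸ (Ideal.span {n}).restrictScalars ℤ) ≃ Eisenstein ⧸ Ideal.span {n} :=
    (Submodule.Quotient.restrictScalarsEquiv ℤ _).toEquiv
  rw [← Nat.card_congr e, ← this, ← basis_det_mul]
  congr 2

section toC

open Complex

local notation "ζ" => exp (2 * Real.pi * I / 3)

lemma isPrimitiveRoot_zeta : IsPrimitiveRoot ζ 3 := by
  simpa using isPrimitiveRoot_exp 3 (by norm_num)

lemma zeta_sq_add_zeta_add_one : ζ ^ 2 + ζ + 1 = 0 := by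
  simpa [Finset.sum_range_succ, add_comm, add_assoc] using
    isPrimitiveRoot_zeta.geom_sum_eq_zero (by norm_num)

lemma conj_zeta : starRingEnd ℂ ζ = ζ ^ 2 := by
  rw [← inv_eq_conj (isPrimitiveRoot_zeta.norm'_eq_one (by norm_num))]
  refine (eq_inv_of_mul_eq_one_left ?_).symm
  rw [← pow_succ, isPrimitiveRoot_zeta.pow_eq_one]

noncomputable def toCHom : Eisenstein →+* ℂ where
  toFun := toC
  map_one' := by simp [toC]
  map_mul' x y := by
    simp only [toC, mul_a, mul_b]
    push_cast
    linear_combination (-(x.b : ℂ) * y.b) * zeta_sq_add_zeta_add_one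
  map_zero' := by simp [toC]
  map_add' x y := by simp only [toC, add_a, add_b]; push_cast; ring

@[simp] lemma toCHom_apply (x : Eisenstein) : toCHom x = toC x := rfl

lemma toC_add (x y : Eisenstein) : toC (x + y) = toC x + toC y := map_add toCHom x y

lemma toC_mul (x y : Eisenstein) : toC (x * y) = toC x * toC y := map_mul toCHom x y

lemma toC_intCast (m : ℤ) : toC m = m := map_intCast toCHom m

lemma toC_conj (x : Eisenstein) : toC (conj x) = starRingEnd ℂ (toC x) := by
  simp only [toC, conj, map_add, map_mul, map_intCast, conj_zeta]
  push_cast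
  linear_combination (-(x.b : ℂ)) * zeta_sq_add_zeta_add_one

end toC

lemma toC_mul_toC_conj (x : Eisenstein) : toC x * toC (conj x) = norm x := by
  rw [← toC_mul, mul_conj, toC_intCast]

lemma toC_ne_zero {x : Eisenstein} (hx : x ≠ 0) : toC x ≠ 0 := fun h => by
  have := toC_mul_toC_conj x
  rw [h, zero_mul, eq_comm, Int.cast_eq_zero, norm_eq_zero] at this
  exact hx this

lemma toCHom_injective : Function.Injective toCHom :=
  (injective_iff_map_eq_zero _).mpr fun _ h => by_contra fun hx => toC_ne_zero hx h

lemma eE_add (z w : ℂ) : eE (z + w) = eE z * eE w := by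
  rw [eE, eE, eE, ← Complex.exp_add, map_add]
  ring_nf

lemma toC_add_conj (y : Eisenstein) : toC y + starRingEnd ℂ (toC y) = trace y := by
  rw [← toC_conj, ← toC_add, self_add_conj, toC_intCast]

lemma eE_toC (y : Eisenstein) : eE (toC y) = 1 := by
  rw [eE, toC_add_conj, mul_comm]
  exact Complex.exp_int_mul_two_pi_mul_I _

lemma dvd_trace_of_eE_div_eq_one (y : Eisenstein) {m : ℤ} (hm : m ≠ 0)
    (h : eE (toC y / m) = 1) : m ∣ trace y := by
  have hm' : (m : ℂ) ≠ 0 := Int.cast_ne_zero.mpr hm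
  rw [eE, map_div₀, map_intCast, ← add_div, toC_add_conj, Complex.exp_eq_one_iff] at h
  obtain ⟨k, hk⟩ := h
  have hk' : (trace y : ℂ) / m = k :=
    mul_left_cancel₀ Complex.two_pi_I_ne_zero (hk.trans (mul_comm _ _))
  refine ⟨k, Int.cast_injective (α := ℂ) ?_⟩
  push_cast
  rw [← hk', mul_div_cancel₀ _ hm']

noncomputable def ψ (n x : Eisenstein) : ℂ := eE (toC x / toC n)

lemma ψ_add (n x y : Eisenstein) : ψ n (x + y) = ψ n x * ψ n y := by
  rw [ψ, ψ, ψ, toC_add, add_div, eE_add]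

lemma ψ_mul_left {d : Eisenstein} (hd : d ≠ 0) (n x : Eisenstein) : ψ (d * n) (d * x) = ψ n x := by
  rw [ψ, ψ, toC_mul, toC_mul, mul_div_mul_left _ _ (toC_ne_zero hd)]

lemma ψ_eq_one_of_dvd {n x : Eisenstein} (hn : n ≠ 0) (h : n ∣ x) : ψ n x = 1 := by
  obtain ⟨c, rfl⟩ := h
  rw [ψ, toC_mul, mul_div_cancel_left₀ _ (toC_ne_zero hn), eE_toC]

lemma ψ_eq_of_dvd_sub {n x y : Eisenstein} (hn : n ≠ 0) (h : n ∣ x - y) : ψ n x = ψ n y := by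
  rw [← sub_add_cancel x y, ψ_add, ψ_eq_one_of_dvd hn h, one_mul]

lemma norm_dvd_trace_of_ψ_eq_one {n x : Eisenstein} (hn : n ≠ 0) (h : ψ n x = 1) :
    norm n ∣ trace (x * conj n) := by
  refine dvd_trace_of_eE_div_eq_one _ (mt norm_eq_zero.mp hn) ?_
  have hconj : conj n ≠ 0 := fun h => hn (norm_eq_zero.mp (by rw [← norm_conj, h]; rfl))
  rwa [← toC_mul_toC_conj, toC_mul, mul_div_mul_right _ _ (toC_ne_zero hconj)]

/-- If `ψ_π` were trivial, `N(π)` would divide the traces of `π̄` and `ωπ̄`, hence `3a` and `3b`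
for `π = a + bω`, hence `9`; then `π ∣ 9`. -/
lemma exists_ψ_ne_one {π : Eisenstein} (hπ : Prime π) (h3 : ¬ π ∣ 3) : ∃ a, ψ π a ≠ 1 := by
  by_contra! h
  have d1 := norm_dvd_trace_of_ψ_eq_one hπ.ne_zero (h 1)
  have d2 := norm_dvd_trace_of_ψ_eq_one hπ.ne_zero (h ω)
  rw [one_mul, show trace (conj π) = 2 * π.a - π.b by simp only [trace, conj]; ring] at d1
  rw [show trace (ω * conj π) = 2 * π.b - π.a by simp only [trace, conj, ω, mul_a, mul_b]; ring]
    at d2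
  obtain ⟨u, hu⟩ : norm π ∣ 3 * π.a := by
    simpa only [show 2 * (2 * π.a - π.b) + 1 * (2 * π.b - π.a) = 3 * π.a by ring]
      using d1.linear_comb d2 2 1
  obtain ⟨v, hv⟩ : norm π ∣ 3 * π.b := by
    simpa only [show 1 * (2 * π.a - π.b) + 2 * (2 * π.b - π.a) = 3 * π.b by ring]
      using d1.linear_comb d2 1 2
  have h9 : norm π ∣ 9 := by
    refine ⟨u ^ 2 - u * v + v ^ 2, mul_left_cancel₀ (mt norm_eq_zero.mp hπ.ne_zero) ?_⟩
    have h9N : 9 * norm π = (3 * π.a) ^ 2 - (3 * π.a) * (3 * π.b) + (3 * π.b) ^ 2 := by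
      rw [norm]; ring
    rw [hu, hv] at h9N
    linear_combination h9N
  have hπN : π ∣ (norm π : Eisenstein) := ⟨conj π, (mul_conj π).symm⟩
  have hπ9 : π ∣ 3 * 3 := hπN.trans (by exact_mod_cast Int.cast_dvd_cast _ _ h9)
  exact h3 ((hπ.dvd_mul.mp hπ9).elim id id)

namespace IsResidueSystem

variable {n : Eisenstein} {R : Finset Eisenstein}

noncomputable def rep (hR : IsResidueSystem n R) (x : Eisenstein) : Eisenstein :=
  (hR x).exists.choose

lemma rep_mem (hR : IsResidueSystem n R) (x : Eisenstein) : hR.rep x ∈ R :=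
  (hR x).exists.choose_spec.1

lemma dvd_sub_rep (hR : IsResidueSystem n R) (x : Eisenstein) : n ∣ x - hR.rep x :=
  (hR x).exists.choose_spec.2

lemma eq_of_dvd_sub (hR : IsResidueSystem n R) {d d' : Eisenstein} (hd : d ∈ R) (hd' : d' ∈ R)
    (h : n ∣ d - d') : d = d' :=
  (hR d).unique ⟨hd, by simp⟩ ⟨hd', h⟩

lemma card_eq (hR : IsResidueSystem n R) : R.card = Nat.card (Eisenstein ⧸ Ideal.span {n}) := by
  rw [← Nat.card_eq_finsetCard]
  refine Nat.card_eq_of_bijective (fun x : R => Ideal.Quotient.mk _ x) ⟨?_, ?_⟩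
  · rintro ⟨x, hx⟩ ⟨y, hy⟩ h
    rw [Ideal.Quotient.eq, Ideal.mem_span_singleton] at h
    exact Subtype.ext (hR.eq_of_dvd_sub hx hy h)
  · intro q
    obtain ⟨x, rfl⟩ := Ideal.Quotient.mk_surjective q
    refine ⟨⟨hR.rep x, hR.rep_mem x⟩, ?_⟩
    rw [Ideal.Quotient.eq, Ideal.mem_span_singleton, ← dvd_neg, neg_sub]
    exact hR.dvd_sub_rep x

lemma card_eq_norm (hR : IsResidueSystem n R) (hn : n ≠ 0) : (R.card : ℤ) = norm n := by
  rw [hR.card_eq, card_quotient_span_singleton hn, Int.natCast_natAbs,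
    abs_of_nonneg (norm_nonneg n)]

lemma sum_comp (hR : IsResidueSystem n R) {f : Eisenstein → ℂ}
    (hf : ∀ x y, n ∣ x - y → f x = f y) {σ : Eisenstein → Eisenstein}
    (hσ : ∀ x y, n ∣ σ x - σ y → n ∣ x - y) :
    ∑ x ∈ R, f (σ x) = ∑ x ∈ R, f x := by
  have hmaps : Set.MapsTo (hR.rep ∘ σ) R R := fun x _ => hR.rep_mem _
  have hinj : Set.InjOn (hR.rep ∘ σ) R := fun x hx y hy h => by
    refine hR.eq_of_dvd_sub hx hy (hσ x y ?_)
    have : σ x - σ y = (σ x - hR.rep (σ x)) - (σ y - hR.rep (σ y)) := by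
      simp only [Function.comp_apply] at h; rw [h]; ring
    rw [this]
    exact dvd_sub (hR.dvd_sub_rep _) (hR.dvd_sub_rep _)
  exact Finset.sum_nbij (hR.rep ∘ σ) hmaps hinj
    (Finset.surjOn_of_injOn_of_card_le _ hmaps hinj le_rfl)
    fun x _ => hf _ _ (hR.dvd_sub_rep _)

lemma sum_eq_zero_of_comp_eq_mul (hR : IsResidueSystem n R) {f : Eisenstein → ℂ}
    (hf : ∀ x y, n ∣ x - y → f x = f y) {σ : Eisenstein → Eisenstein}
    (hσ : ∀ x y, n ∣ σ x - σ y → n ∣ x - y) {c : ℂ} (hc : c ≠ 1)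
    (hfσ : ∀ x, f (σ x) = c * f x) :
    ∑ x ∈ R, f x = 0 := by
  have h := hR.sum_comp hf hσ
  simp only [hfσ, ← Finset.mul_sum] at h
  exact (mul_eq_zero.mp (by linear_combination h : (c - 1) * ∑ x ∈ R, f x = 0)).resolve_left
    (sub_ne_zero.mpr hc)

lemma preimage_mul {s t : Eisenstein} (hR : IsResidueSystem (s * t) R) (hs : s ≠ 0) :
    IsResidueSystem t (R.preimage (s * ·) (mul_right_injective₀ hs).injOn) := by
  intro z
  obtain ⟨d, ⟨hd, hzd⟩, huniq⟩ := hR (s * z)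
  obtain ⟨y, rfl⟩ : s ∣ d := by
    simpa using (dvd_sub (dvd_mul_right s z) ((dvd_mul_right s t).trans hzd))
  refine ⟨y, ⟨by simpa using hd, ?_⟩, fun y' ⟨hy', hzy'⟩ => ?_⟩
  · rwa [← mul_sub, mul_dvd_mul_iff_left hs] at hzd
  · refine mul_left_cancel₀ hs (huniq _ ⟨by simpa using hy', ?_⟩)
    rw [← mul_sub]
    exact mul_dvd_mul_left s hzy'

end IsResidueSystem

namespace IsCubicResidueSymbol

variable {χ : Eisenstein → Eisenstein → Eisenstein} (hχ : IsCubicResidueSymbol χ)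
include hχ

lemma apply_pow_right (m n : Eisenstein) {k : ℕ} (hk : k ≠ 0) : χ m (n ^ k) = χ m n ^ k := by
  induction k with
  | zero => exact absurd rfl hk
  | succ k ih =>
    rcases eq_or_ne k 0 with rfl | hk0
    · simp
    · rw [pow_succ, hχ.2.1, ih hk0, pow_succ]

variable {π : Eisenstein} (hπ : Prime π) (h3 : ¬ π ∣ 3)
include hπ h3

lemma eq_zero_of_dvd {x : Eisenstein} (hx : π ∣ x) : χ x π = 0 :=
  hχ.2.2.1 x π hπ h3 hx

lemma pow_three_eq_one {x : Eisenstein} (hx : ¬ π ∣ x) : χ x π ^ 3 = 1 := by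
  have h := (hχ.2.2.2 x π hπ h3 hx).1
  simp only [Set.mem_insert_iff, Set.mem_singleton_iff] at h
  rcases h with h | h | h <;> rw [h] <;> decide

/-- Distinct cube roots of unity differ by an element of norm `3`, which `π` cannot divide. -/
lemma eq_of_dvd_sub {x y : Eisenstein} (hxy : π ∣ x - y) : χ x π = χ y π := by
  by_cases hx : π ∣ x
  · have hy : π ∣ y := by simpa using dvd_sub hx hxy
    rw [hχ.eq_zero_of_dvd hπ h3 hx, hχ.eq_zero_of_dvd hπ h3 hy]
  have hy : ¬ π ∣ y := fun hy => hx (by simpa using dvd_add hxy hy)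
  obtain ⟨hxmem, hxcong⟩ := hχ.2.2.2 x π hπ h3 hx
  obtain ⟨hymem, hycong⟩ := hχ.2.2.2 y π hπ h3 hy
  by_contra hne
  refine not_dvd_of_norm_eq_three h3 (norm_sub_eq_three hxmem hymem hne) ?_
  have := dvd_add (dvd_sub hycong hxcong)
    (hxy.trans (sub_dvd_pow_sub_pow x y ((norm π - 1) / 3).toNat))
  convert this using 1
  ring

/-- `ℤ[ω]/π` is a field with `N(π)` elements, so not all of its nonzero elements are roots of
`X^((N(π) - 1) / 3) - 1`. -/
lemma exists_ne_one (hN : 4 ≤ norm π) : ∃ u, ¬ π ∣ u ∧ χ u π ≠ 1 := by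
  classical
  set I := Ideal.span {π}
  have : I.IsPrime := (Ideal.span_singleton_prime hπ.ne_zero).mpr hπ
  have hcard : Nat.card (Eisenstein ⧸ I) = (norm π).natAbs :=
    card_quotient_span_singleton hπ.ne_zero
  have : Finite (Eisenstein ⧸ I) := Nat.finite_of_card_ne_zero (by omega)
  have : Fintype (Eisenstein ⧸ I) := .ofFinite _
  let : Field (Eisenstein ⧸ I) := Fintype.fieldOfDomain _
  obtain ⟨g, hg0, hge⟩ := FiniteField.exists_pow_ne_one (F := Eisenstein ⧸ I)
    (e := ((norm π - 1) / 3).toNat) (by omega) (by omega)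
  obtain ⟨u, rfl⟩ := Ideal.Quotient.mk_surjective g
  have hu : ¬ π ∣ u := by
    rwa [ne_eq, Ideal.Quotient.eq_zero_iff_mem, Ideal.mem_span_singleton] at hg0
  refine ⟨u, hu, fun h1 => hge ?_⟩
  have := (hχ.2.2.2 u π hπ h3 hu).2
  rw [h1] at this
  rw [← map_pow, ← map_one (Ideal.Quotient.mk I), Ideal.Quotient.eq, Ideal.mem_span_singleton]
  exact this

end IsCubicResidueSymbol

lemma gSum_eq_sum_ψ (χ : Eisenstein → Eisenstein → Eisenstein) (r n : Eisenstein)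
    (R : Finset Eisenstein) : gSum χ r n R = ∑ x ∈ R, toC (χ x n) * ψ n (r * x) := by
  simp only [gSum, ψ, toC_mul]

variable {χ : Eisenstein → Eisenstein → Eisenstein} (hχ : IsCubicResidueSymbol χ)
  {π : Eisenstein} (hπ : Prime π) (h3 : ¬ π ∣ 3) {R : Finset Eisenstein}
include hχ hπ h3

lemma gSum_sq_eq_zero_of_le_two (hN : 4 ≤ norm π) {k : ℕ} (hk0 : k ≠ 0) (hk2 : k ≤ 2)
    (hR : IsResidueSystem (π ^ k) R) : gSum χ (π ^ 2) (π ^ k) R = 0 := by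
  have hπk : π ^ k ≠ 0 := pow_ne_zero k hπ.ne_zero
  have hterm : ∀ x ∈ R, toC (χ x (π ^ k)) * ψ (π ^ k) (π ^ 2 * x) = toC (χ x π ^ k) := by
    intro x _
    rw [ψ_eq_one_of_dvd hπk ((pow_dvd_pow π hk2).trans (dvd_mul_right _ x)), mul_one,
      hχ.apply_pow_right x π hk0]
  rw [gSum_eq_sum_ψ, Finset.sum_congr rfl hterm]
  obtain ⟨u, hu, hχu⟩ := hχ.exists_ne_one hπ h3 hN
  have hχuk : χ u π ^ k ≠ 1 := fun h => by
    have hgcd : k.gcd 3 = 1 := by rcases (by omega : k = 1 ∨ k = 2) with rfl | rfl <;> rfl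
    exact hχu (by simpa [hgcd] using pow_gcd_eq_one.mpr ⟨h, hχ.pow_three_eq_one hπ h3 hu⟩)
  refine hR.sum_eq_zero_of_comp_eq_mul (σ := (u * ·)) (c := toC (χ u π ^ k)) ?_ ?_ ?_ ?_
  · intro x y hxy
    rw [hχ.eq_of_dvd_sub hπ h3 ((dvd_pow_self π hk0).trans hxy)]
  · intro x y hxy
    rw [← mul_sub] at hxy
    exact hπ.pow_dvd_of_dvd_mul_left k hu hxy
  · exact fun h => hχuk (toCHom_injective (h.trans toCHom.map_one.symm))
  · intro x
    rw [hχ.1, mul_pow, toC_mul]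

lemma gSum_sq_pow_three (hR : IsResidueSystem (π ^ 3) R) :
    gSum χ (π ^ 2) (π ^ 3) R = -(norm (π ^ 2) : ℂ) := by
  classical
  have hterm : ∀ x ∈ R, toC (χ x (π ^ 3)) * ψ (π ^ 3) (π ^ 2 * x) =
      ψ π x - if π ∣ x then 1 else 0 := by
    intro x _
    rw [pow_succ π 2, ψ_mul_left (pow_ne_zero 2 hπ.ne_zero), ← pow_succ,
      hχ.apply_pow_right x π three_ne_zero]
    split_ifs with hx
    · rw [hχ.eq_zero_of_dvd hπ h3 hx, ψ_eq_one_of_dvd hπ.ne_zero hx]; simp [toC]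
    · rw [hχ.pow_three_eq_one hπ h3 hx]; simp [toC]
  obtain ⟨a, ha⟩ := exists_ψ_ne_one hπ h3
  have hψ : ∑ x ∈ R, ψ π x = 0 := by
    refine hR.sum_eq_zero_of_comp_eq_mul (σ := (· + a)) ?_ (by simp) ha (fun x => ?_)
    · exact fun x y hxy => ψ_eq_of_dvd_sub hπ.ne_zero ((dvd_pow_self π three_ne_zero).trans hxy)
    · rw [ψ_add, mul_comm]
  have hcount : ((R.filter (π ∣ ·)).card : ℤ) = norm (π ^ 2) := by
    have hT := IsResidueSystem.preimage_mul (s := π) (t := π ^ 2) (by rwa [← pow_succ']) hπ.ne_zero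
    rw [← hT.card_eq_norm (pow_ne_zero 2 hπ.ne_zero), Finset.card_preimage]
    congr 2
    ext x
    simp [Dvd.dvd, eq_comm]
  rw [gSum_eq_sum_ψ, Finset.sum_congr rfl hterm, Finset.sum_sub_distrib, hψ, Finset.sum_boole,
    zero_sub]
  exact_mod_cast congrArg Neg.neg hcount

lemma gSum_sq_eq_zero_of_four_le {k : ℕ} (hk : 4 ≤ k) (hR : IsResidueSystem (π ^ k) R) :
    gSum χ (π ^ 2) (π ^ k) R = 0 := by
  obtain ⟨m, rfl⟩ : ∃ m, k = m + 3 := ⟨k - 3, by omega⟩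
  have hterm : ∀ x ∈ R, toC (χ x (π ^ (m + 3))) * ψ (π ^ (m + 3)) (π ^ 2 * x) =
      toC (χ x π ^ (m + 3)) * ψ (π ^ (m + 1)) x := by
    intro x _
    rw [hχ.apply_pow_right x π (by omega), show π ^ (m + 3) = π ^ 2 * π ^ (m + 1) by ring,
      ψ_mul_left (pow_ne_zero 2 hπ.ne_zero)]
  rw [gSum_eq_sum_ψ, Finset.sum_congr rfl hterm]
  obtain ⟨a, ha⟩ := exists_ψ_ne_one hπ h3
  refine hR.sum_eq_zero_of_comp_eq_mul (σ := (· + π ^ m * a)) ?_ (by simp) ha (fun x => ?_)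
  · intro x y hxy
    rw [hχ.eq_of_dvd_sub hπ h3 ((dvd_pow_self π (by omega)).trans hxy),
      ψ_eq_of_dvd_sub (pow_ne_zero _ hπ.ne_zero) ((pow_dvd_pow π (by omega)).trans hxy)]
  · have hχ_shift : χ (x + π ^ m * a) π = χ x π := hχ.eq_of_dvd_sub hπ h3 (by
      rw [add_sub_cancel_left]; exact (dvd_pow_self π (by omega)).mul_right a)
    rw [hχ_shift, ψ_add, pow_succ π m, ψ_mul_left (pow_ne_zero m hπ.ne_zero)]
    ring

end Eisenstein

open Eisenstein in
/-- For `π ≡ 1 (mod 3)` prime and `k ≥ 1`: `g(π², π^k) = -N(π²)` if `k = 3`, else `0`. -/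
theorem statement_12 (χ : Eisenstein → Eisenstein → Eisenstein)
    (hχ : IsCubicResidueSymbol χ) (π : Eisenstein) (hπ : Prime π)
    (h1 : (3 : Eisenstein) ∣ π - 1) (k : ℕ) (hk : 1 ≤ k)
    (R : Finset Eisenstein) (hR : IsResidueSystem (π ^ k) R) :
    gSum χ (π ^ 2) (π ^ k) R = if k = 3 then -((norm (π ^ 2) : ℤ) : ℂ) else 0 := by
  have h3 : ¬ π ∣ 3 := not_dvd_three hπ.not_isUnit h1
  split_ifs with hk3
  · subst hk3
    exact gSum_sq_pow_three hχ hπ h3 hR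
  · rcases (by omega : k ≤ 2 ∨ 4 ≤ k) with hk2 | hk4
    · exact gSum_sq_eq_zero_of_le_two hχ hπ h3 (four_le_norm hπ.not_isUnit h1) (by omega) hk2 hR
    · exact gSum_sq_eq_zero_of_four_le hχ hπ h3 hk4 hR
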